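/- Let A = S/I be a monomial Artinian K-algebra whose monomial poset M(A) has the LYM property, and let p > 0 be an integer with dim_K A_p > dim_K A_k for all k < p. Then the ideal I + m^p has the strong Rees property: for every homogeneous ideal J strictly containing I + m^p, μ(J) < μ(I + m^p). -/

import Mathlib

/-!
Fix a monomial order and let `G` be the set of minimal exponents of the initial ideal of `J`.
Homogeneous elements of `J` with these leading exponents generate `J`, and since `m^p ⊆ J` all of
`G` lies in degrees `≤ p`, so `μ(J) ≤ |G|`. The exponents of `G` lying in `I` are minimal
generators of `I` of degree `≤ p`; the others form an antichain of `M(A)` in degrees `≤ p`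
containing one of degree `< p` (because `J ⊋ I + m^p`), so by the LYM inequality and the strict
maximality of `dim A_p` there are fewer than `dim A_p` of them. Conversely the minimal monomial
generators of `I + m^p`, namely those of `I` of degree `≤ p` together with the monomials of
`M_p(A)`, stay linearly independent modulo `m (I + m^p)`, so `μ(I + m^p)` is at least their number.
-/

open MvPolynomial

/-- The minimal number of generators of an ideal. -/
noncomputable def mu {R : Type*} [CommRing R] (I : Ideal R) : ℕ :=
  sInf {k | ∃ s : Finset R, s.card = k ∧ Ideal.span (s : Set R) = I}

/-- The graded maximal ideal `(x₁, …, xₙ)` of `K[x₁, …, xₙ]`. -/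
noncomputable def mm (K : Type*) [Field K] (n : ℕ) : Ideal (MvPolynomial (Fin n) K) :=
  Ideal.span (Set.range X)

/-- `I` is `m`-full: `mI : y = I` for some `y ∈ m`. -/
def IsMFull {R : Type*} [CommRing R] (m I : Ideal R) : Prop :=
  ∃ y ∈ m, (m * I).colon (Ideal.span {y}) = I

/-- A homogeneous ideal: one containing all homogeneous components of its elements. -/
def IsHomog {K : Type*} [Field K] {n : ℕ} (I : Ideal (MvPolynomial (Fin n) K)) : Prop :=
  ∀ f ∈ I, ∀ k : ℕ, homogeneousComponent k f ∈ I

/-- `dim_K (S/I)_k`, the dimension of the degree `k` part of `S/I`. -/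
noncomputable def hdim (K : Type*) [Field K] (n : ℕ)
    (I : Ideal (MvPolynomial (Fin n) K)) (k : ℕ) : ℕ :=
  Module.finrank K (Submodule.map (Ideal.Quotient.mkₐ K I).toLinearMap
    (homogeneousSubmodule (Fin n) K k))

/-- The total degree of an exponent vector. -/
def mdeg {n : ℕ} (d : Fin n →₀ ℕ) : ℕ := d.sum fun _ e => e

/-- `M_k(S/I)`: the exponent vectors of degree `k` monomials not in `I`. -/
def MSet (K : Type*) [Field K] {n : ℕ} (I : Ideal (MvPolynomial (Fin n) K)) (k : ℕ) :
    Set (Fin n →₀ ℕ) := {d | mdeg d = k ∧ (monomial d (1 : K)) ∉ I}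

/-- `I` is a monomial ideal. -/
def IsMonomialIdeal {K : Type*} [Field K] {n : ℕ} (I : Ideal (MvPolynomial (Fin n) K)) : Prop :=
  ∀ f ∈ I, ∀ d ∈ f.support, (monomial d (1 : K)) ∈ I

/-- The LYM property of the divisibility poset of monomials outside `I`,
ranked by degree.  (Divisibility of monomials is the pointwise order `≤` on
exponent vectors.) -/
def MLYM (K : Type*) [Field K] {n : ℕ} (I : Ideal (MvPolynomial (Fin n) K)) : Prop :=
  ∀ F : Finset (Fin n →₀ ℕ), (∀ d ∈ F, (monomial d (1 : K)) ∉ I) →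
    IsAntichain (· ≤ ·) (F : Set (Fin n →₀ ℕ)) →
    ∑ d ∈ F, (1 : ℚ) / (MSet K I (mdeg d)).ncard ≤ 1

/-- The Sperner property of the Artinian algebra `S/I`:
the maximal number of generators of an ideal of `S/I` equals the maximal
value of the Hilbert function of `S/I`. -/
def SpernerAlg {K : Type*} [Field K] {n : ℕ} (I : Ideal (MvPolynomial (Fin n) K)) : Prop :=
  sSup {m | ∃ J : Ideal (MvPolynomial (Fin n) K ⧸ I), mu J = m}
    = sSup (Set.range (hdim K n I))

lemma Finsupp.degree_lt_degree {σ : Type*} {d e : σ →₀ ℕ} (h : d < e) : d.degree < e.degree := by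
  obtain ⟨c, rfl⟩ := exists_add_of_le h.le
  have hc : c ≠ 0 := by rintro rfl; simp at h
  rw [map_add, lt_add_iff_pos_right, pos_iff_ne_zero, Ne, Finsupp.degree_eq_zero_iff]
  exact hc

namespace MvPolynomial

open scoped MonomialOrder

variable {σ K : Type*} [Field K]

lemma IsHomogeneous.degree_of_mem_support {f : MvPolynomial σ K} {k : ℕ}
    (hf : f.IsHomogeneous k) {d : σ →₀ ℕ} (hd : d ∈ f.support) : d.degree = k :=
  (hf.degree_eq_sum_deg_support hd).symm

lemma IsHomogeneous.mem_pow_idealOfVars {f : MvPolynomial σ K} {k p : ℕ}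
    (hf : f.IsHomogeneous k) (hpk : p ≤ k) : f ∈ idealOfVars σ K ^ p :=
  (mem_pow_idealOfVars_iff p f).2 fun _ hd => (hf.degree_of_mem_support hd).symm ▸ hpk

def monomialExponents (I : Ideal (MvPolynomial σ K)) : Set (σ →₀ ℕ) :=
  {d | monomial d (1 : K) ∈ I}

lemma isUpperSet_monomialExponents (I : Ideal (MvPolynomial σ K)) :
    IsUpperSet (monomialExponents I) :=
  fun _ _ hde hd => I.mem_of_dvd (monomial_one_dvd_monomial_one.2 hde) hd

section LeadingExponents

variable (m : MonomialOrder σ)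

/-- For a homogeneous ideal `J`, the exponents of the monomials of the initial ideal `in_m(J)`. -/
def leadingExponents (J : Ideal (MvPolynomial σ K)) : Set (σ →₀ ℕ) :=
  {d | ∃ f ∈ J, f.IsHomogeneous d.degree ∧ f ≠ 0 ∧ m.degree f = d}

variable {m}

lemma degree_mem_leadingExponents {J : Ideal (MvPolynomial σ K)} {f : MvPolynomial σ K} {k : ℕ}
    (hfJ : f ∈ J) (hf : f.IsHomogeneous k) (hf0 : f ≠ 0) :
    m.degree f ∈ leadingExponents m J :=
  ⟨f, hfJ, by rwa [hf.degree_of_mem_support (m.degree_mem_support hf0)], hf0, rfl⟩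

lemma degree_monomial_one (d : σ →₀ ℕ) : m.degree (monomial d (1 : K)) = d := by
  classical
  simp [m.degree_monomial]

lemma monomialExponents_subset_leadingExponents (J : Ideal (MvPolynomial σ K)) :
    monomialExponents J ⊆ leadingExponents m J := fun d hd => by
  simpa [degree_monomial_one] using
    degree_mem_leadingExponents (m := m) hd (isHomogeneous_monomial 1 rfl) (by simp)

lemma isUpperSet_leadingExponents (J : Ideal (MvPolynomial σ K)) :
    IsUpperSet (leadingExponents m J) := by
  rintro _ e hde ⟨f, hfJ, hf, hf0, rfl⟩
  have hc : monomial (e - m.degree f) (1 : K) ≠ 0 := by simp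
  have := degree_mem_leadingExponents (m := m) (J.mul_mem_left _ hfJ)
    ((isHomogeneous_monomial 1 rfl).mul hf) (mul_ne_zero hc hf0)
  rwa [m.degree_mul hc hf0, degree_monomial_one, tsub_add_cancel_of_le hde] at this

lemma degree_sub_smul_lt {f g : MvPolynomial σ K} (hg : g ≠ 0) (hfg : m.degree g = m.degree f)
    (h : f - (m.leadingCoeff f / m.leadingCoeff g) • g ≠ 0) :
    m.degree (f - (m.leadingCoeff f / m.leadingCoeff g) • g) ≺[m] m.degree f := by
  set c := m.leadingCoeff f / m.leadingCoeff g
  refine lt_of_le_of_ne (m.degree_sub_le.trans (sup_le le_rfl ?_)) fun heq => h ?_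
  · exact hfg ▸ m.degree_smul_le
  · have hg' : coeff (m.degree f) g ≠ 0 := hfg ▸ m.coeff_degree_ne_zero_iff.2 hg
    rw [← m.coeff_degree_eq_zero_iff, m.toSyn.injective heq, coeff_sub, coeff_smul, smul_eq_mul]
    simp only [c, MonomialOrder.leadingCoeff, hfg]
    rw [div_mul_cancel₀ _ hg', sub_self]

/-- Cancelling the leading term of `f` against an element of `L` strictly lowers its leading
exponent, so well-founded induction on the monomial order applies. -/
theorem mem_of_forall_degree_mem_leadingExponents {L J : Ideal (MvPolynomial σ K)}
    (hLJ : L ≤ J) {k : ℕ}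
    (h : ∀ f ∈ J, f.IsHomogeneous k → f ≠ 0 → m.degree f ∈ leadingExponents m L)
    {f : MvPolynomial σ K} (hfJ : f ∈ J) (hf : f.IsHomogeneous k) : f ∈ L := by
  induction hd : m.toSyn (m.degree f) using WellFoundedLT.induction generalizing f with
  | _ a ih =>
  by_cases hf0 : f = 0
  · exact hf0 ▸ L.zero_mem
  obtain ⟨g, hgL, hg, hg0, hgf⟩ := h f hfJ hf hf0
  rw [hf.degree_of_mem_support (m.degree_mem_support hf0)] at hg
  set c := m.leadingCoeff f / m.leadingCoeff g
  rw [← sub_add_cancel f (c • g)]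
  refine L.add_mem ?_ (Submodule.smul_of_tower_mem L c hgL)
  by_cases h0 : f - c • g = 0
  · exact h0 ▸ L.zero_mem
  exact ih _ (hd ▸ degree_sub_smul_lt hg0 hgf h0)
    (J.sub_mem hfJ (Submodule.smul_of_tower_mem J c (hLJ hgL)))
    (hf.sub ((mem_homogeneousSubmodule k _).1 (Submodule.smul_mem _ c hg))) rfl

end LeadingExponents

end MvPolynomial

section Generators

variable {K : Type*} [Field K] {n : ℕ}

lemma mu_le_card {R : Type*} [CommRing R] {I : Ideal R} (s : Finset R)
    (hs : Ideal.span (s : Set R) = I) : mu I ≤ s.card :=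
  Nat.sInf_le ⟨s, rfl, hs⟩

lemma degree_le_of_minimal_leadingExponents {m : MonomialOrder (Fin n)}
    {J : Ideal (MvPolynomial (Fin n) K)} {p : ℕ}
    (hpJ : mm K n ^ p ≤ J) {d : Fin n →₀ ℕ} (hd : Minimal (· ∈ leadingExponents m J) d) :
    d.degree ≤ p := by
  by_contra! hpd
  obtain ⟨e, hed, he⟩ := d.exists_le_degree_eq p hpd.le
  have heJ : e ∈ leadingExponents m J := monomialExponents_subset_leadingExponents J
    (hpJ ((monomial_mem_pow_idealOfVars_iff p e one_ne_zero).2 he.ge))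
  exact (he ▸ hpd).not_ge (Finsupp.degree_mono (hd.2 heJ hed))

theorem span_image_minimal_leadingExponents {m : MonomialOrder (Fin n)}
    {J : Ideal (MvPolynomial (Fin n) K)} (hJ : IsHomog J)
    {w : (Fin n →₀ ℕ) → MvPolynomial (Fin n) K}
    (hw : ∀ d ∈ leadingExponents m J,
      w d ∈ J ∧ (w d).IsHomogeneous d.degree ∧ w d ≠ 0 ∧ m.degree (w d) = d) :
    Ideal.span (w '' {d | Minimal (· ∈ leadingExponents m J) d}) = J := by
  set L := Ideal.span (w '' {d | Minimal (· ∈ leadingExponents m J) d})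
  have hLJ : L ≤ J := Ideal.span_le.2 (by rintro _ ⟨d, hd, rfl⟩; exact (hw d hd.prop).1)
  have hhom : ∀ k, ∀ f ∈ J, f.IsHomogeneous k → f ∈ L := by
    intro k
    induction k using Nat.strong_induction_on with
    | _ k ih =>
    refine fun f hfJ hf => mem_of_forall_degree_mem_leadingExponents (m := m) hLJ
      (fun f hfJ hf hf0 => ?_) hfJ hf
    have hd := degree_mem_leadingExponents (m := m) hfJ hf hf0
    by_cases hmin : Minimal (· ∈ leadingExponents m J) (m.degree f)
    · exact ⟨w _, Ideal.subset_span ⟨_, hmin, rfl⟩, (hw _ hd).2⟩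
    obtain ⟨v, hvd, g, hgJ, hg, hg0, rfl⟩ := exists_lt_of_not_minimal hd hmin
    have hgL : g ∈ L := ih _ (hf.degree_of_mem_support (m.degree_mem_support hf0) ▸
      Finsupp.degree_lt_degree hvd) g hgJ hg
    exact isUpperSet_leadingExponents L hvd.le (degree_mem_leadingExponents hgL hg hg0)
  refine le_antisymm hLJ fun f hf => ?_
  rw [← sum_homogeneousComponent f]
  exact sum_mem fun k _ => hhom k _ (hJ f hf k) (homogeneousComponent_isHomogeneous k f)

lemma finite_minimal_leadingExponents (m : MonomialOrder (Fin n))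
    {J : Ideal (MvPolynomial (Fin n) K)} {p : ℕ} (hpJ : mm K n ^ p ≤ J) :
    {d | Minimal (· ∈ leadingExponents m J) d}.Finite :=
  (Finsupp.finite_of_degree_le p).subset fun _ hd => degree_le_of_minimal_leadingExponents hpJ hd

lemma mu_le_ncard_minimal_leadingExponents (m : MonomialOrder (Fin n))
    {J : Ideal (MvPolynomial (Fin n) K)} (hJ : IsHomog J) {p : ℕ} (hpJ : mm K n ^ p ≤ J) :
    mu J ≤ {d | Minimal (· ∈ leadingExponents m J) d}.ncard := by
  classical
  have hfin := finite_minimal_leadingExponents m hpJ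
  choose! w hw using fun d (hd : d ∈ leadingExponents m J) => hd
  calc mu J ≤ (hfin.toFinset.image w).card := mu_le_card _ (by
        rw [Finset.coe_image, Set.Finite.coe_toFinset]
        exact span_image_minimal_leadingExponents hJ hw)
    _ ≤ hfin.toFinset.card := Finset.card_image_le
    _ = _ := (Set.ncard_eq_toFinset_card _ hfin).symm

end Generators

section NewExponent

variable {K : Type*} [Field K] {n : ℕ} (m : MonomialOrder (Fin n))

/-- Dropping from `f` the terms whose monomials lie in `I` leaves an element of `J` whose leading
monomial is outside `I`. -/
lemma exists_mem_leadingExponents_notMem {I J : Ideal (MvPolynomial (Fin n) K)}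
    (hIJ : I ≤ J) {f : MvPolynomial (Fin n) K} (hfJ : f ∈ J) {k : ℕ} (hf : f.IsHomogeneous k)
    (hfI : f ∉ I) :
    ∃ d ∈ leadingExponents m J, d.degree = k ∧ d ∉ monomialExponents I := by
  classical
  set h := ∑ d ∈ f.support with d ∈ monomialExponents I, monomial d (coeff d f)
  set g := ∑ d ∈ f.support with d ∉ monomialExponents I, monomial d (coeff d f)
  have hfhg : f = h + g := by
    conv_lhs =>
      rw [f.as_sum, ← Finset.sum_filter_add_sum_filter_not _ (· ∈ monomialExponents I)]
  have hI : h ∈ I := sum_mem fun d hd => by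
    simpa [C_mul_monomial] using I.mul_mem_left (C (coeff d f)) (Finset.mem_filter.1 hd).2
  have hgJ : g ∈ J := by simpa [hfhg] using J.sub_mem hfJ (hIJ hI)
  have hg : g.IsHomogeneous k := IsHomogeneous.sum _ _ _ fun d hd =>
    isHomogeneous_monomial _ (hf.degree_of_mem_support (Finset.mem_filter.1 hd).1)
  have hg0 : g ≠ 0 := fun h0 => hfI (by simpa [hfhg, h0] using hI)
  have hgsupp : g.support ⊆ f.support.filter (· ∉ monomialExponents I) :=
    support_sum.trans (Finset.biUnion_subset.2 fun d hd => support_monomial_subset.trans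
      (Finset.singleton_subset_iff.2 hd))
  have hdeg := Finset.mem_filter.1 (hgsupp (m.degree_mem_support hg0))
  exact ⟨_, degree_mem_leadingExponents hgJ hg hg0, hf.degree_of_mem_support hdeg.1, hdeg.2⟩

lemma exists_minimal_leadingExponents_notMem {I J : Ideal (MvPolynomial (Fin n) K)}
    (hJ : IsHomog J) {p : ℕ} (hQJ : I + mm K n ^ p < J) :
    ∃ d, Minimal (· ∈ leadingExponents m J) d ∧ d.degree < p ∧
      d ∉ monomialExponents I := by
  obtain ⟨f, hfJ, hfQ⟩ := SetLike.exists_of_lt hQJ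
  obtain ⟨k, hkp, hkI⟩ : ∃ k < p, homogeneousComponent k f ∉ I := by
    by_contra! h
    refine hfQ (sum_homogeneousComponent f ▸ sum_mem fun k _ => ?_)
    rcases lt_or_ge k p with hk | hk
    · exact Submodule.mem_sup_left (h k hk)
    · exact Submodule.mem_sup_right
        ((homogeneousComponent_isHomogeneous k f).mem_pow_idealOfVars hk)
  obtain ⟨e, he, hek, heI⟩ := exists_mem_leadingExponents_notMem m
    (le_sup_left.trans hQJ.le) (hJ f hfJ k) (homogeneousComponent_isHomogeneous k f) hkI
  obtain ⟨d, hde, hd⟩ := exists_minimal_le_of_wellFoundedLT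
    (fun d => d ∈ leadingExponents m J ∧ d ∉ monomialExponents I) e ⟨he, heI⟩
  refine ⟨d, ⟨hd.prop.1, fun v hv hvd => hd.2 ⟨hv, fun hvI => hd.prop.2 ?_⟩ hvd⟩,
    (Finsupp.degree_mono hde).trans_lt (hek ▸ hkp), hd.prop.2⟩
  exact isUpperSet_monomialExponents I hvd hvI

end NewExponent

section HilbertFunction

variable {K : Type*} [Field K] {n : ℕ}

lemma mdeg_eq_degree (d : Fin n →₀ ℕ) : mdeg d = d.degree := rfl

lemma MSet_finite (I : Ideal (MvPolynomial (Fin n) K)) (k : ℕ) : (MSet K I k).Finite :=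
  (Finsupp.finite_of_degree_eq k).subset fun _ hd => hd.1

lemma linearIndependent_monomial_of_ker {σ V : Type*} [AddCommGroup V] [Module K V]
    (π : MvPolynomial σ K →ₗ[K] V) {D : Set (σ →₀ ℕ)}
    (hπ : ∀ f ∈ LinearMap.ker π, ∀ d ∈ f.support, d ∉ D) :
    LinearIndependent K (fun d : D => π (monomial (d : σ →₀ ℕ) 1)) := by
  have hv : LinearIndependent K (fun d : D => monomial (d : σ →₀ ℕ) (1 : K)) :=
    (basisMonomials σ K).linearIndependent.comp _ Subtype.val_injective
  refine hv.map (Submodule.disjoint_def.2 fun f hfD hf => ?_)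
  rw [← Set.image_eq_range (fun d => monomial d (1 : K)), ← restrictSupport_eq_span,
    mem_restrictSupport_iff] at hfD
  rw [← support_eq_empty, Finset.eq_empty_iff_forall_notMem]
  exact fun d hd => hπ f hf d hd (hfD hd)

lemma hdim_eq_ncard_MSet {I : Ideal (MvPolynomial (Fin n) K)} (hI : IsMonomialIdeal I) (k : ℕ) :
    hdim K n I k = (MSet K I k).ncard := by
  classical
  have := (MSet_finite I k).fintype
  set π := (Ideal.Quotient.mkₐ K I).toLinearMap
  have hker : ∀ f, f ∈ LinearMap.ker π ↔ f ∈ I := fun f => by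
    simp [π, Ideal.Quotient.mkₐ_eq_mk, Ideal.Quotient.eq_zero_iff_mem]
  have hli := linearIndependent_monomial_of_ker π (D := MSet K I k)
    fun f hf d hd hdM => hdM.2 (hI f ((hker f).1 hf) d hd)
  have hspan : Submodule.map π (homogeneousSubmodule (Fin n) K k) =
      Submodule.span K (Set.range fun d : MSet K I k => π (monomial (d : _) 1)) := by
    rw [homogeneousSubmodule_eq_finsupp_supported, ← restrictSupport, restrictSupport_eq_span,
      Submodule.map_span, Set.image_image]
    refine le_antisymm (Submodule.span_le.2 ?_) (Submodule.span_mono ?_)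
    · rintro _ ⟨d, hd, rfl⟩
      by_cases hdI : monomial d (1 : K) ∈ I
      · simp [LinearMap.mem_ker.1 ((hker _).2 hdI)]
      · exact Submodule.subset_span ⟨⟨d, hd, hdI⟩, rfl⟩
    · rintro _ ⟨d, rfl⟩
      exact ⟨d, d.2.1, rfl⟩
  rw [hdim, hspan, finrank_span_eq_card hli, Set.ncard_eq_toFinset_card', Set.toFinset_card]

lemma card_lt_of_sum_inv_le_one {ι : Type*} {F : Finset ι} {a : ι → ℕ} {N : ℕ}
    (hsum : ∑ i ∈ F, (1 : ℚ) / a i ≤ 1) (hpos : ∀ i ∈ F, 0 < a i)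
    (hle : ∀ i ∈ F, a i ≤ N)
    {i₀ : ι} (hi₀ : i₀ ∈ F) (hlt : a i₀ < N) : F.card < N := by
  have hN : (0 : ℚ) < N := by exact_mod_cast (hpos i₀ hi₀).trans hlt
  have hcard : (F.card : ℚ) / N < 1 := calc
    (F.card : ℚ) / N = ∑ i ∈ F, (1 : ℚ) / N := by simp [div_eq_mul_inv]
    _ < ∑ i ∈ F, (1 : ℚ) / a i := Finset.sum_lt_sum
        (fun i hi => one_div_le_one_div_of_le (by exact_mod_cast hpos i hi)
          (by exact_mod_cast hle i hi))
        ⟨i₀, hi₀, one_div_lt_one_div_of_lt (by exact_mod_cast hpos i₀ hi₀)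
          (by exact_mod_cast hlt)⟩
    _ ≤ 1 := hsum
  exact_mod_cast (div_lt_one hN).1 hcard

lemma card_lt_ncard_MSet_of_isAntichain {I : Ideal (MvPolynomial (Fin n) K)} (hLYM : MLYM K I)
    {p : ℕ} (hp : ∀ k < p, (MSet K I k).ncard < (MSet K I p).ncard)
    {F : Finset (Fin n →₀ ℕ)} (hFI : ∀ d ∈ F, d ∉ monomialExponents I)
    (hF : IsAntichain (· ≤ ·) (F : Set (Fin n →₀ ℕ))) (hFp : ∀ d ∈ F, d.degree ≤ p)
    {d₀ : Fin n →₀ ℕ} (hd₀ : d₀ ∈ F) (hd₀p : d₀.degree < p) :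
    F.card < (MSet K I p).ncard :=
  card_lt_of_sum_inv_le_one (hLYM F hFI hF)
    (fun d hd => (Set.ncard_pos (MSet_finite I _)).2 ⟨d, rfl, hFI d hd⟩)
    (fun d hd => (hFp d hd).lt_or_eq.elim (fun h => (hp _ h).le) fun h => by rw [mdeg_eq_degree, h])
    hd₀ (hp _ hd₀p)

end HilbertFunction

section MinimalGenerators

variable {K : Type*} [Field K] {n : ℕ}

lemma sub_C_constantCoeff_mem_idealOfVars {σ : Type*} (a : MvPolynomial σ K) :
    a - C (constantCoeff a) ∈ idealOfVars σ K := by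
  rw [← pow_one (idealOfVars σ K), mem_pow_idealOfVars_iff]
  intro x hx
  rw [Nat.one_le_iff_ne_zero, Ne, Finsupp.degree_eq_zero_iff]
  rintro rfl
  simp [← constantCoeff_eq] at hx

lemma mem_span_sup_mul_of_mem_span {σ : Type*} (s : Set (MvPolynomial σ K))
    {q : MvPolynomial σ K} (hq : q ∈ Ideal.span s) :
    q ∈ Submodule.span K s ⊔ (idealOfVars σ K * Ideal.span s).restrictScalars K := by
  induction hq using Submodule.span_induction with
  | mem x hx => exact Submodule.mem_sup_left (Submodule.subset_span hx)
  | zero => exact zero_mem _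
  | add x y _ _ hx hy => exact add_mem hx hy
  | smul a x hx ihx =>
    rw [smul_eq_mul, ← add_sub_cancel (C (constantCoeff a)) a, add_mul, ← smul_eq_C_mul]
    exact add_mem (Submodule.smul_mem _ _ ihx) (Submodule.mem_sup_right
      (Ideal.mul_mem_mul (sub_C_constantCoeff_mem_idealOfVars a) hx))

lemma exists_lt_mem_monomialExponents_of_mem_mul {Q : Ideal (MvPolynomial (Fin n) K)}
    (hQ : IsMonomialIdeal Q) {f : MvPolynomial (Fin n) K} (hf : f ∈ mm K n * Q) :
    ∀ d ∈ f.support, ∃ e ∈ monomialExponents Q, e < d := by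
  classical
  refine Submodule.mul_induction_on hf (fun a ha b hb d hd => ?_) fun x y hx hy d hd => ?_
  · obtain ⟨da, hda, db, hdb, rfl⟩ := Finset.mem_add.1 (support_mul a b hd)
    have hda0 : 1 ≤ da.degree :=
      (mem_pow_idealOfVars_iff 1 a).1 (by rw [pow_one]; exact ha) da hda
    refine ⟨db, hQ b hb db hdb, lt_add_of_pos_left db (pos_iff_ne_zero.2 ?_)⟩
    rintro rfl
    simp at hda0
  · rcases Finset.mem_union.1 (support_add hd) with h | h
    exacts [hx d h, hy d h]

/-- The monomials of the minimal generators of `Q` stay linearly independent modulo `m Q`. -/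
theorem card_le_mu_of_minimal {Q : Ideal (MvPolynomial (Fin n) K)} (hQ : IsMonomialIdeal Q)
    (G : Finset (Fin n →₀ ℕ)) (hG : ∀ d ∈ G, Minimal (· ∈ monomialExponents Q) d) :
    G.card ≤ mu Q := by
  classical
  obtain ⟨s₀, hs₀⟩ := IsNoetherian.noetherian Q
  refine le_csInf ⟨_, s₀, rfl, hs₀⟩ ?_
  rintro _ ⟨s, rfl, hs⟩
  set π := ((mm K n * Q).restrictScalars K).mkQ
  have hli : LinearIndependent K (fun d : G => π (monomial (d : Fin n →₀ ℕ) 1)) :=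
    linearIndependent_monomial_of_ker π fun f hf d hd hdG => by
      rw [Submodule.ker_mkQ] at hf
      obtain ⟨e, he, hed⟩ := exists_lt_mem_monomialExponents_of_mem_mul hQ hf d hd
      exact (hG d hdG).not_lt he hed
  have hrange : ∀ d : G, π (monomial (d : Fin n →₀ ℕ) 1) ∈
      Submodule.span K ((s.image π : Finset _) : Set _) := by
    intro d
    have := mem_span_sup_mul_of_mem_span (s : Set (MvPolynomial (Fin n) K))
      (hs ▸ (hG d d.2).prop)
    rw [hs] at this
    obtain ⟨a, ha, b, hb, hab⟩ := Submodule.mem_sup.1 this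
    have hπb : π b = 0 := LinearMap.mem_ker.1 (by rw [Submodule.ker_mkQ]; exact hb)
    rw [← hab, map_add, hπb, add_zero, Finset.coe_image, ← Submodule.map_span]
    exact Submodule.mem_map_of_mem ha
  calc G.card = Fintype.card G := (Fintype.card_coe G).symm
    _ = Module.finrank K (Submodule.span K (Set.range fun d : G => π (monomial (d : _) 1))) :=
      (finrank_span_eq_card hli).symm
    _ ≤ Module.finrank K (Submodule.span K ((s.image π : Finset _) : Set _)) :=
      Submodule.finrank_mono (Submodule.span_le.2 (Set.range_subset_iff.2 hrange))
    _ ≤ (s.image π).card := finrank_span_finset_le_card _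
    _ ≤ s.card := Finset.card_image_le

end MinimalGenerators

section ReesIdeal

variable {K : Type*} [Field K] {n : ℕ} {I : Ideal (MvPolynomial (Fin n) K)}

lemma IsMonomialIdeal.sup_mm_pow (hI : IsMonomialIdeal I) (p : ℕ) :
    IsMonomialIdeal (I + mm K n ^ p) := by
  intro f hf d hd
  obtain ⟨a, ha, b, hb, rfl⟩ := Submodule.mem_sup.1 hf
  rcases Finset.mem_union.1 (support_add hd) with h | h
  · exact Submodule.mem_sup_left (hI a ha d h)
  · exact Submodule.mem_sup_right ((monomial_mem_pow_idealOfVars_iff p d one_ne_zero).2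
      ((mem_pow_idealOfVars_iff p b).1 hb d h))

lemma mem_monomialExponents_sup_mm_pow_iff (hI : IsMonomialIdeal I) {p : ℕ}
    {d : Fin n →₀ ℕ} :
    d ∈ monomialExponents (I + mm K n ^ p) ↔ d ∈ monomialExponents I ∨ p ≤ d.degree := by
  refine ⟨fun h => ?_, fun h => h.elim Submodule.mem_sup_left fun h => Submodule.mem_sup_right
    ((monomial_mem_pow_idealOfVars_iff p d one_ne_zero).2 h)⟩
  obtain ⟨a, ha, b, hb, hab⟩ := Submodule.mem_sup.1 h
  have hcoeff : coeff d a + coeff d b = 1 := by rw [← coeff_add, hab, coeff_monomial, if_pos rfl]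
  by_cases had : coeff d a = 0
  · refine Or.inr ((mem_pow_idealOfVars_iff p b).1 hb d (mem_support_iff.2 ?_))
    simp [had] at hcoeff
    simp [hcoeff]
  · exact Or.inl (hI a ha d (mem_support_iff.2 had))

lemma minimal_monomialExponents_sup_mm_pow (hI : IsMonomialIdeal I) {p : ℕ} {d : Fin n →₀ ℕ}
    (hd : (Minimal (· ∈ monomialExponents I) d ∧ d.degree ≤ p) ∨ d ∈ MSet K I p) :
    Minimal (· ∈ monomialExponents (I + mm K n ^ p)) d := by
  simp only [minimal_iff_forall_lt, mem_monomialExponents_sup_mm_pow_iff hI, not_or, not_le]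
  rcases hd with ⟨hmin, hdp⟩ | ⟨hdp, hdI⟩
  · exact ⟨Or.inl hmin.prop, fun e hed =>
      ⟨hmin.not_prop_of_lt hed, (Finsupp.degree_lt_degree hed).trans_le hdp⟩⟩
  · exact ⟨Or.inr hdp.ge, fun e hed =>
      ⟨fun heI => hdI (isUpperSet_monomialExponents I hed.le heI),
        hdp ▸ Finsupp.degree_lt_degree hed⟩⟩

lemma ncard_minimal_add_ncard_MSet_le_mu (hI : IsMonomialIdeal I) (p : ℕ) :
    {d | Minimal (· ∈ monomialExponents I) d ∧ d.degree ≤ p}.ncard + (MSet K I p).ncard ≤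
      mu (I + mm K n ^ p) := by
  have hT : {d | Minimal (· ∈ monomialExponents I) d ∧ d.degree ≤ p}.Finite :=
    (Finsupp.finite_of_degree_le p).subset fun _ hd => hd.2
  have hdisj :
      Disjoint {d | Minimal (· ∈ monomialExponents I) d ∧ d.degree ≤ p} (MSet K I p) :=
    Set.disjoint_left.2 fun _ hd hdM => hdM.2 hd.1.prop
  rw [← Set.ncard_union_eq hdisj hT (MSet_finite I p),
    Set.ncard_eq_toFinset_card _ (hT.union (MSet_finite I p))]
  exact card_le_mu_of_minimal (hI.sup_mm_pow p) _ fun d hd =>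
    minimal_monomialExponents_sup_mm_pow hI
      ((Set.mem_union _ _ _).1 ((Set.Finite.mem_toFinset _).1 hd))

end ReesIdeal

section Counting

variable {K : Type*} [Field K] {n : ℕ} (m : MonomialOrder (Fin n))
  {I J : Ideal (MvPolynomial (Fin n) K)} {p : ℕ}

lemma ncard_minimal_leadingExponents_inter_le (hIJ : I ≤ J) (hpJ : mm K n ^ p ≤ J) :
    ({d | Minimal (· ∈ leadingExponents m J) d} ∩ monomialExponents I).ncard ≤
      {d | Minimal (· ∈ monomialExponents I) d ∧ d.degree ≤ p}.ncard :=
  Set.ncard_le_ncard (fun _ hd => ⟨hd.1.mono (fun _ he =>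
      monomialExponents_subset_leadingExponents J (hIJ he)) hd.2,
        degree_le_of_minimal_leadingExponents hpJ hd.1⟩)
    ((Finsupp.finite_of_degree_le p).subset fun _ hd => hd.2)

lemma ncard_minimal_leadingExponents_sdiff_lt (hLYM : MLYM K I)
    (hp : ∀ k < p, (MSet K I k).ncard < (MSet K I p).ncard) (hJ : IsHomog J)
    (hQJ : I + mm K n ^ p < J) :
    ({d | Minimal (· ∈ leadingExponents m J) d} \ monomialExponents I).ncard <
      (MSet K I p).ncard := by
  have hpJ : mm K n ^ p ≤ J := le_sup_right.trans hQJ.le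
  have hfin := (finite_minimal_leadingExponents m hpJ).sdiff (t := monomialExponents I)
  obtain ⟨d₀, hd₀, hd₀p, hd₀I⟩ := exists_minimal_leadingExponents_notMem m hJ hQJ
  rw [Set.ncard_eq_toFinset_card _ hfin]
  refine card_lt_ncard_MSet_of_isAntichain hLYM hp (fun d hd => (hfin.mem_toFinset.1 hd).2) ?_
    (fun d hd => degree_le_of_minimal_leadingExponents hpJ (hfin.mem_toFinset.1 hd).1)
    (hfin.mem_toFinset.2 ⟨hd₀, hd₀I⟩) hd₀p
  rw [hfin.coe_toFinset]
  exact (setOfPred_minimal_antichain _).subset Set.sdiff_subset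

end Counting

theorem stmt5_general {K : Type*} [Field K] {n : ℕ} (I : Ideal (MvPolynomial (Fin n) K))
    (hmon : IsMonomialIdeal I)
    (hLYM : MLYM K I)
    (p : ℕ) (hp : ∀ k : ℕ, k < p → hdim K n I k < hdim K n I p) :
    ∀ J : Ideal (MvPolynomial (Fin n) K), IsHomog J → I + mm K n ^ p < J →
      mu J < mu (I + mm K n ^ p) := by
  intro J hJ hQJ
  let m : MonomialOrder (Fin n) := .lex
  have hpJ : mm K n ^ p ≤ J := le_sup_right.trans hQJ.le
  have hupper := mu_le_ncard_minimal_leadingExponents m hJ hpJ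
  have hsplit := Set.ncard_inter_add_ncard_sdiff_eq_ncard _ (monomialExponents I)
    (finite_minimal_leadingExponents m hpJ)
  have hGI := ncard_minimal_leadingExponents_inter_le m (le_sup_left.trans hQJ.le) hpJ
  have hGnotI := ncard_minimal_leadingExponents_sdiff_lt m hLYM
    (fun k hk => by simpa only [hdim_eq_ncard_MSet hmon] using hp k hk) hJ hQJ
  have hlower := ncard_minimal_add_ncard_MSet_le_mu hmon p
  omega

/-- Let `A = S/I` be a monomial Artinian algebra whose monomial poset has the
LYM property, and let `p > 0` be an integer with `dim_K A_p > dim_K A_k` for all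
`k < p`.  Then `I + m^p` has the strong Rees property. -/
theorem stmt5 {K : Type*} [Field K] {n : ℕ} (I : Ideal (MvPolynomial (Fin n) K))
    (hmon : IsMonomialIdeal I) [FiniteDimensional K (MvPolynomial (Fin n) K ⧸ I)]
    (hLYM : MLYM K I)
    (p : ℕ) (hp0 : 0 < p) (hp : ∀ k : ℕ, k < p → hdim K n I k < hdim K n I p) :
    ∀ J : Ideal (MvPolynomial (Fin n) K), IsHomog J → I + mm K n ^ p < J →
      mu J < mu (I + mm K n ^ p) :=
  stmt5_general I hmon hLYM p hp
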